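/- Assume P and PᵀP are irreducible and at least one coarse state contains more than one fine state. Then ‖(I − Π(μ)) J(μ)‖²_{1/μ} = 1 − inf_{z ∈ rg(I−S(μ)), z≠0} ⟨z, (I − P̂*P̂) z⟩_{1/μ} / ‖(I − Π(μ)) z‖²_{1/μ}, and this quantity is strictly less than 1. -/

import Mathlib

open Matrix BigOperators

/-- A matrix is column stochastic: nonnegative entries, each column sums to one. -/
def ColStoch {m : Type*} [Fintype m] (M : Matrix m m ℝ) : Prop :=
  (∀ i j, 0 ≤ M i j) ∧ ∀ j, ∑ i, M i j = 1

/-- Irreducibility of a matrix via its pattern of nonzero entries: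
the associated directed graph is strongly connected. -/
def Irred {m : Type*} [Fintype m] [DecidableEq m] (M : Matrix m m ℝ) : Prop :=
  ∀ i j, ∃ k : ℕ, 0 < k ∧ (M ^ k) i j ≠ 0

/-- Weighted inner product `⟨x,y⟩_w = ∑ i, x i * y i * w i`. -/
def innerW {m : Type*} [Fintype m] (w x y : m → ℝ) : ℝ := ∑ i, x i * y i * w i

/-- Weighted `ℓ²(w)` norm. -/
noncomputable def normW {m : Type*} [Fintype m] (w x : m → ℝ) : ℝ :=
  Real.sqrt (innerW w x x)

/-- Operator norm of a matrix with respect to the `ℓ²(w)` norm. -/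
noncomputable def opNormW {m : Type*} [Fintype m] (w : m → ℝ) (M : Matrix m m ℝ) : ℝ :=
  sInf {c | 0 ≤ c ∧ ∀ x, normW w (M.mulVec x) ≤ c * normW w x}

/-- Aggregation operator for the partition `{f⁻¹(i)}` of `Fin N`. -/
def Agg {N n : ℕ} (f : Fin N → Fin n) : Matrix (Fin n) (Fin N) ℝ :=
  fun i x => if f x = i then 1 else 0

/-- Disaggregation operator for the partition `{f⁻¹(i)}` and weight vector ν. -/
noncomputable def Disagg {N n : ℕ} (f : Fin N → Fin n) (ν : Fin N → ℝ) :
    Matrix (Fin N) (Fin n) ℝ :=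
  fun j i => if f j = i then ν j / (Agg f).mulVec ν i else 0

/-- Coarse approximation `C(ν) = A P D(ν)`. -/
noncomputable def CoarseC {N n : ℕ} (P : Matrix (Fin N) (Fin N) ℝ) (f : Fin N → Fin n)
    (ν : Fin N → ℝ) : Matrix (Fin n) (Fin n) ℝ := Agg f * P * Disagg f ν

/-- `P̂ = P - μ 𝟙ᵀ`. -/
def hatP {N : ℕ} (P : Matrix (Fin N) (Fin N) ℝ) (μ : Fin N → ℝ) :
    Matrix (Fin N) (Fin N) ℝ := P - vecMulVec μ 1

/-- Coarse projection `S(ν) = D(ν)[A(I-P+μ𝟙ᵀ)D(ν)]⁻¹ A(I-P+μ𝟙ᵀ)`. -/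
noncomputable def CoarseS {N n : ℕ} (P : Matrix (Fin N) (Fin N) ℝ) (f : Fin N → Fin n)
    (μ ν : Fin N → ℝ) : Matrix (Fin N) (Fin N) ℝ :=
  Disagg f ν * (Agg f * (1 - P + vecMulVec μ 1) * Disagg f ν)⁻¹ *
    (Agg f * (1 - P + vecMulVec μ 1))

/-- Orthogonal coarse projection `Π(ν) = D(ν) A`. -/
noncomputable def PiProj {N n : ℕ} (f : Fin N → Fin n) (ν : Fin N → ℝ) :
    Matrix (Fin N) (Fin N) ℝ := Disagg f ν * Agg f

/-- Error propagation operator `J(ν) = P̂ (I - S(ν))`. -/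
noncomputable def Jop {N n : ℕ} (P : Matrix (Fin N) (Fin N) ℝ) (f : Fin N → Fin n)
    (μ ν : Fin N → ℝ) : Matrix (Fin N) (Fin N) ℝ := hatP P μ * (1 - CoarseS P f μ ν)

/-- Spectrum (set of complex eigenvalues) of a real matrix. -/
noncomputable def specC {N : ℕ} (M : Matrix (Fin N) (Fin N) ℝ) : Set ℂ :=
  spectrum ℂ (M.map (Complex.ofReal))

/-- Spectral radius of a real matrix. -/
noncomputable def specRad {N : ℕ} (M : Matrix (Fin N) (Fin N) ℝ) : ℝ :=
  sSup ((fun z : ℂ => ‖z‖) '' specC M)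

/-- The `ℓ²(1/μ)`-adjoint `diag(μ) Mᵀ diag(1/μ)`. -/
noncomputable def adjW {N : ℕ} (μ : Fin N → ℝ) (M : Matrix (Fin N) (Fin N) ℝ) :
    Matrix (Fin N) (Fin N) ℝ :=
  Matrix.diagonal μ * Mᵀ * Matrix.diagonal (fun i => (μ i)⁻¹)

/-- The ε-inner product `⟨x,y⟩_ε = ⟨x,(I-Π(μ))y⟩_{1/μ} + ε ⟨x,Π(μ)y⟩_{1/μ}`. -/
noncomputable def innerEps {N n : ℕ} (f : Fin N → Fin n) (μ : Fin N → ℝ) (ε : ℝ)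
    (x y : Fin N → ℝ) : ℝ :=
  innerW (fun i => (μ i)⁻¹) x ((1 - PiProj f μ).mulVec y) +
    ε * innerW (fun i => (μ i)⁻¹) x ((PiProj f μ).mulVec y)

/-- The ε-norm. -/
noncomputable def normEps {N n : ℕ} (f : Fin N → Fin n) (μ : Fin N → ℝ) (ε : ℝ)
    (x : Fin N → ℝ) : ℝ := Real.sqrt (innerEps f μ ε x x)

/-- Operator norm induced by the ε-norm. -/
noncomputable def opNormEps {N n : ℕ} (f : Fin N → Fin n) (μ : Fin N → ℝ) (ε : ℝ)
    (M : Matrix (Fin N) (Fin N) ℝ) : ℝ :=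
  sInf {c | 0 ≤ c ∧ ∀ x, normEps f μ ε (M.mulVec x) ≤ c * normEps f μ ε x}

/-!
On `ker S = rg (I - S)` the aggregation condition `A (I - P̂) z = 0` gives `Π P̂ z = Π z`, so by
Pythagoras in `ℓ²(1/μ)`

  `‖(I - Π) P̂ z‖² = ‖(I - Π) z‖² - ⟨z, (I - P̂* P̂) z⟩`.

Since `(I - Π)(I - S) = I - Π` and `(I - S)(I - Π) = I - S`, this identity shows that
`‖(I - Π) J‖²` is one minus the minimum of the Rayleigh quotient, and the minimum is attained by
compactness of the unit sphere of `ker S` (nontrivial because some coarse state is not a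
singleton). The quotient is positive: `‖P̂ z‖² = ‖P z‖² - (∑ z)²`, and by Lagrange's identity
`P` is a contraction of `ℓ²(1/μ)` whose only equality cases are the multiples of `μ` when `PᵀP`
is irreducible. Irreducibility of `P` makes `A (I - P + μ𝟙ᵀ) D` invertible, by a
Perron–Frobenius argument for the coarse matrix `C = A P D`.
-/

section Weighted

variable {ι : Type*} [Fintype ι]

lemma innerW_comm (w x y : ι → ℝ) : innerW w x y = innerW w y x :=
  Finset.sum_congr rfl fun _ _ => by ring

lemma innerW_sub_right (w x y z : ι → ℝ) :
    innerW w x (y - z) = innerW w x y - innerW w x z := by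
  simp only [innerW, Pi.sub_apply, mul_sub, sub_mul, Finset.sum_sub_distrib]

lemma innerW_sub_left (w x y z : ι → ℝ) :
    innerW w (x - y) z = innerW w x z - innerW w y z := by
  rw [innerW_comm, innerW_sub_right, innerW_comm w z, innerW_comm w z]

lemma innerW_smul_right (w x y : ι → ℝ) (c : ℝ) :
    innerW w x (c • y) = c * innerW w x y := by
  simp only [innerW, Pi.smul_apply, smul_eq_mul, Finset.mul_sum]
  exact Finset.sum_congr rfl fun _ _ => by ring

lemma innerW_smul_left (w x y : ι → ℝ) (c : ℝ) :
    innerW w (c • x) y = c * innerW w x y := by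
  rw [innerW_comm, innerW_smul_right, innerW_comm]

lemma innerW_self_nonneg {w : ι → ℝ} (hw : ∀ i, 0 ≤ w i) (x : ι → ℝ) : 0 ≤ innerW w x x :=
  Finset.sum_nonneg fun i _ => mul_nonneg (mul_self_nonneg _) (hw i)

lemma innerW_self_pos {w : ι → ℝ} (hw : ∀ i, 0 < w i) {x : ι → ℝ} (hx : x ≠ 0) :
    0 < innerW w x x := by
  obtain ⟨i, hi⟩ := Function.ne_iff.1 hx
  exact Finset.sum_pos' (fun j _ => mul_nonneg (mul_self_nonneg _) (hw j).le)
    ⟨i, Finset.mem_univ i, mul_pos (mul_self_pos.2 hi) (hw i)⟩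

lemma normW_sq {w : ι → ℝ} (hw : ∀ i, 0 ≤ w i) (x : ι → ℝ) : normW w x ^ 2 = innerW w x x :=
  Real.sq_sqrt (innerW_self_nonneg hw x)

lemma continuous_innerW_mulVec (w : ι → ℝ) (A B : Matrix ι ι ℝ) :
    Continuous fun z : ι → ℝ => innerW w (A *ᵥ z) (B *ᵥ z) := by
  unfold innerW
  fun_prop

lemma innerW_mulVec_smul (w : ι → ℝ) (A B : Matrix ι ι ℝ) (c : ℝ) (z : ι → ℝ) :
    innerW w (A *ᵥ (c • z)) (B *ᵥ (c • z)) = c ^ 2 * innerW w (A *ᵥ z) (B *ᵥ z) := by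
  rw [mulVec_smul, mulVec_smul, innerW_smul_left, innerW_smul_right]
  ring

lemma opNormW_sq_eq_of_attained {w : ι → ℝ} {M : Matrix ι ι ℝ} {c : ℝ}
    (hc : 0 ≤ c) (hle : ∀ x, innerW w (M *ᵥ x) (M *ᵥ x) ≤ c * innerW w x x)
    {x₀ : ι → ℝ} (hx₀ : 0 < innerW w x₀ x₀)
    (heq : innerW w (M *ᵥ x₀) (M *ᵥ x₀) = c * innerW w x₀ x₀) :
    opNormW w M ^ 2 = c := by
  suffices IsLeast {c' | 0 ≤ c' ∧ ∀ x, normW w (M *ᵥ x) ≤ c' * normW w x} √c by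
    rw [opNormW, this.csInf_eq, Real.sq_sqrt hc]
  refine ⟨⟨Real.sqrt_nonneg c, fun x => ?_⟩, fun c' ⟨_, hc'⟩ => ?_⟩
  · rw [normW, normW, ← Real.sqrt_mul hc]
    exact Real.sqrt_le_sqrt (hle x)
  · have h := hc' x₀
    rw [normW, normW, heq, Real.sqrt_mul hc] at h
    exact le_of_mul_le_mul_right h (Real.sqrt_pos.2 hx₀)

lemma sum_mulVec_of_sum_col_eq_one {κ : Type*} [Fintype κ] {M : Matrix κ ι ℝ}
    (hM : ∀ j, ∑ i, M i j = 1) (v : ι → ℝ) : ∑ i, (M *ᵥ v) i = ∑ j, v j := by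
  simp only [mulVec, dotProduct]
  rw [Finset.sum_comm]
  simp [← Finset.sum_mul, hM]

lemma sum_mul_sum_mul_sq_sub_sq (a r : ι → ℝ) :
    (∑ l, a l) * (∑ l, a l * r l ^ 2) - (∑ l, a l * r l) ^ 2
      = (∑ l, ∑ l', a l * a l' * (r l - r l') ^ 2) / 2 := by
  have h : ∀ l l', a l * a l' * (r l - r l') ^ 2
      = a l * r l ^ 2 * a l' - 2 * (a l * r l) * (a l' * r l') + a l * (a l' * r l' ^ 2) :=
    fun _ _ => by ring
  simp only [h, Finset.sum_add_distrib, Finset.sum_sub_distrib, ← Finset.mul_sum,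
    ← Finset.sum_mul]
  ring

end Weighted

section Homogeneous

variable {E : Type*} [NormedAddCommGroup E] [NormedSpace ℝ E] [FiniteDimensional ℝ E]

lemma exists_forall_div_le_div (V : Submodule ℝ E) (hV : V ≠ ⊥) {g h : E → ℝ}
    (hg : Continuous g) (hh : Continuous h)
    (hg2 : ∀ (c : ℝ) z, g (c • z) = c ^ 2 * g z) (hh2 : ∀ (c : ℝ) z, h (c • z) = c ^ 2 * h z)
    (hpos : ∀ z ∈ V, z ≠ 0 → 0 < h z) :
    ∃ z₀ ∈ V, z₀ ≠ 0 ∧ ∀ z ∈ V, z ≠ 0 → g z₀ / h z₀ ≤ g z / h z := by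
  have hscale : ∀ z : E, z ≠ 0 → g (‖z‖⁻¹ • z) / h (‖z‖⁻¹ • z) = g z / h z := fun z hz => by
    rw [hg2, hh2, mul_div_mul_left _ _ (pow_ne_zero 2 (inv_ne_zero (norm_ne_zero_iff.2 hz)))]
  have hK : IsCompact ((V : Set E) ∩ Metric.sphere 0 1) :=
    (isCompact_sphere 0 1).inter_left V.closed_of_finiteDimensional
  have hK0 : ∀ z ∈ (V : Set E) ∩ Metric.sphere 0 1, z ≠ 0 := by
    rintro z ⟨-, hz⟩ rfl
    simp at hz
  have hnorm : ∀ z ∈ V, z ≠ 0 → ‖z‖⁻¹ • z ∈ (V : Set E) ∩ Metric.sphere 0 1 := fun z hz hz0 =>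
    ⟨V.smul_mem _ hz, by simp [norm_smul, norm_ne_zero_iff.2 hz0]⟩
  obtain ⟨z, hzV, hz0⟩ := V.ne_bot_iff.1 hV
  obtain ⟨z₀, hz₀K, hmin⟩ := hK.exists_isMinOn ⟨_, hnorm z hzV hz0⟩
    (hg.continuousOn.div hh.continuousOn fun z hz => (hpos z hz.1 (hK0 z hz)).ne')
  refine ⟨z₀, hz₀K.1, hK0 z₀ hz₀K, fun z hzV hz0 => ?_⟩
  rw [← hscale z hz0]
  exact hmin (hnorm z hzV hz0)

end Homogeneous

section Projection

variable {ι : Type*} [Fintype ι] [DecidableEq ι]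

lemma innerW_self_eq_add_of_idempotent {w : ι → ℝ} {Q : Matrix ι ι ℝ} (hQQ : Q * Q = Q)
    (hQ : ∀ x y, innerW w (Q *ᵥ x) y = innerW w x (Q *ᵥ y)) (x : ι → ℝ) :
    innerW w x x = innerW w (Q *ᵥ x) (Q *ᵥ x) + innerW w ((1 - Q) *ᵥ x) ((1 - Q) *ᵥ x) := by
  have hQx : innerW w (Q *ᵥ x) (Q *ᵥ x) = innerW w (Q *ᵥ x) x := by
    rw [hQ, mulVec_mulVec, hQQ, innerW_comm]
  rw [sub_mulVec, one_mulVec, innerW_sub_left, innerW_sub_right, innerW_sub_right, hQx,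
    innerW_comm w x (Q *ᵥ x)]
  ring

lemma mem_range_one_sub_mulVec_iff {S : Matrix ι ι ℝ} (hSS : S * S = S) (z : ι → ℝ) :
    z ∈ Set.range (1 - S).mulVec ↔ S *ᵥ z = 0 := by
  refine ⟨?_, fun h => ⟨z, by rw [sub_mulVec, one_mulVec, h, sub_zero]⟩⟩
  rintro ⟨x, rfl⟩
  rw [mulVec_mulVec, Matrix.mul_sub, Matrix.mul_one, hSS, sub_self, zero_mulVec]

end Projection

section Adjoint

variable {N : ℕ}

lemma innerW_mulVec_left_eq_adjW {μ : Fin N → ℝ} (hμ : ∀ i, 0 < μ i)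
    (M : Matrix (Fin N) (Fin N) ℝ) (x y : Fin N → ℝ) :
    innerW (fun i => (μ i)⁻¹) (M *ᵥ x) y = innerW (fun i => (μ i)⁻¹) x (adjW μ M *ᵥ y) := by
  simp only [innerW, mulVec, dotProduct, adjW, mul_diagonal, diagonal_mul, transpose_apply,
    Finset.sum_mul, Finset.mul_sum]
  rw [Finset.sum_comm]
  refine Finset.sum_congr rfl fun j _ => Finset.sum_congr rfl fun i _ => ?_
  field_simp [(hμ i).ne', (hμ j).ne']

lemma innerW_one_sub_adjW_mul_self {μ : Fin N → ℝ} (hμ : ∀ i, 0 < μ i)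
    (M : Matrix (Fin N) (Fin N) ℝ) (z : Fin N → ℝ) :
    innerW (fun i => (μ i)⁻¹) z ((1 - adjW μ M * M) *ᵥ z)
      = innerW (fun i => (μ i)⁻¹) z z - innerW (fun i => (μ i)⁻¹) (M *ᵥ z) (M *ᵥ z) := by
  rw [sub_mulVec, one_mulVec, innerW_sub_right, ← mulVec_mulVec,
    innerW_mulVec_left_eq_adjW hμ]

end Adjoint

section Connectivity

variable {ι : Type*}

def StronglyConnected (M : Matrix ι ι ℝ) : Prop :=
  ∀ i j, Relation.ReflTransGen (fun a b => M a b ≠ 0) i j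

lemma reflTransGen_of_pow_apply_ne_zero [Fintype ι] [DecidableEq ι] {M : Matrix ι ι ℝ} :
    ∀ (k : ℕ) {i j : ι}, (M ^ k) i j ≠ 0 → Relation.ReflTransGen (fun a b => M a b ≠ 0) i j
  | 0, i, j, h => by
    rw [pow_zero, one_apply] at h
    split_ifs at h with hij
    · exact hij ▸ .refl
    · exact absurd rfl h
  | k + 1, i, j, h => by
    rw [pow_succ', mul_apply] at h
    obtain ⟨l, -, hl⟩ := Finset.exists_ne_zero_of_sum_ne_zero h
    exact .head (left_ne_zero_of_mul hl)
      (reflTransGen_of_pow_apply_ne_zero k (right_ne_zero_of_mul hl))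

lemma Irred.stronglyConnected [Fintype ι] [DecidableEq ι] {M : Matrix ι ι ℝ} (hM : Irred M) :
    StronglyConnected M := fun i j =>
  let ⟨k, _, hk⟩ := hM i j
  reflTransGen_of_pow_apply_ne_zero k hk

lemma StronglyConnected.forall_of_invariant {M : Matrix ι ι ℝ} (hM : StronglyConnected M)
    {p : ι → Prop} (hp : ∀ i j, M i j ≠ 0 → p i → p j) {i : ι} (hi : p i) (j : ι) : p j := by
  induction hM i j with
  | refl => exact hi
  | tail _ hbc ih => exact hp _ _ hbc ih

lemma StronglyConnected.of_surjective {κ : Type*} {M : Matrix ι ι ℝ} {M' : Matrix κ κ ℝ}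
    (hM : StronglyConnected M) {g : ι → κ} (hg : Function.Surjective g)
    (h : ∀ a b, M a b ≠ 0 → M' (g a) (g b) ≠ 0) : StronglyConnected M' := by
  intro i j
  obtain ⟨a, rfl⟩ := hg i
  obtain ⟨b, rfl⟩ := hg j
  exact (hM a b).lift g h

lemma eq_smul_of_mulVec_eq_self [Fintype ι] {M : Matrix ι ι ℝ} (hM : ∀ i j, 0 ≤ M i j)
    (hMc : StronglyConnected M) {ν : ι → ℝ} (hν : ∀ i, 0 < ν i) (hMν : M *ᵥ ν = ν)
    {x : ι → ℝ} (hx : M *ᵥ x = x) : ∃ c : ℝ, x = c • ν := by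
  cases isEmpty_or_nonempty ι
  · exact ⟨0, Subsingleton.elim _ _⟩
  obtain ⟨i₀, hi₀⟩ := Finite.exists_min fun i => x i / ν i
  refine ⟨x i₀ / ν i₀, sub_eq_zero.1 (funext ?_)⟩
  set z := x - (x i₀ / ν i₀) • ν
  have hz : ∀ i, 0 ≤ z i := fun i => by
    simpa [z, ← le_div_iff₀ (hν i)] using hi₀ i
  have hMz : M *ᵥ z = z := by rw [mulVec_sub, mulVec_smul, hx, hMν]
  have hzero : ∀ i j, M i j ≠ 0 → z i = 0 → z j = 0 := fun i j hij hzi => by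
    have hsum : ∑ l, M i l * z l = 0 := (congrFun hMz i).trans hzi
    have := (Finset.sum_eq_zero_iff_of_nonneg fun l _ => mul_nonneg (hM i l) (hz l)).1 hsum j
      (Finset.mem_univ j)
    exact (mul_eq_zero.1 this).resolve_left hij
  exact hMc.forall_of_invariant hzero (i := i₀) (by simp [z, div_mul_cancel₀ _ (hν i₀).ne'])

end Connectivity

section Aggregation

variable {N n : ℕ} {f : Fin N → Fin n} {μ : Fin N → ℝ}

lemma vecMul_Agg (g : Fin n → ℝ) : g ᵥ* Agg f = g ∘ f := by
  ext j
  simp [vecMul, dotProduct, Agg]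

lemma sum_Agg_apply (j : Fin N) : ∑ i, Agg f i j = 1 := by
  simpa [vecMul, dotProduct] using congrFun (vecMul_Agg (f := f) 1) j

lemma Agg_mulVec_apply (v : Fin N → ℝ) (i : Fin n) :
    (Agg f *ᵥ v) i = ∑ j, if f j = i then v j else 0 := by
  simp [Agg, mulVec, dotProduct, ite_mul]

lemma Agg_nonneg (f : Fin N → Fin n) (i : Fin n) (j : Fin N) : 0 ≤ Agg f i j := by
  unfold Agg; split_ifs <;> norm_num

lemma Agg_mulVec_pos (hf : Function.Surjective f) (hμ : ∀ i, 0 < μ i) (i : Fin n) :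
    0 < (Agg f *ᵥ μ) i := by
  obtain ⟨j, rfl⟩ := hf i
  rw [Agg_mulVec_apply]
  exact Finset.sum_pos' (fun l _ => by split_ifs <;> simp [(hμ l).le])
    ⟨j, Finset.mem_univ j, by simp [hμ j]⟩

lemma Disagg_nonneg (hf : Function.Surjective f) (hμ : ∀ i, 0 < μ i) (j : Fin N) (i : Fin n) :
    0 ≤ Disagg f μ j i := by
  unfold Disagg
  split_ifs
  · exact (div_pos (hμ j) (Agg_mulVec_pos hf hμ i)).le
  · rfl

lemma sum_Disagg_apply (hf : Function.Surjective f) (hμ : ∀ i, 0 < μ i) (i : Fin n) :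
    ∑ j, Disagg f μ j i = 1 := by
  have h : ∀ j, Disagg f μ j i = (if f j = i then μ j else 0) / (Agg f *ᵥ μ) i := fun j => by
    unfold Disagg; split_ifs <;> simp_all
  simp only [h, ← Finset.sum_div, ← Agg_mulVec_apply]
  exact div_self (Agg_mulVec_pos hf hμ i).ne'

lemma Agg_mul_Disagg (hf : Function.Surjective f) (hμ : ∀ i, 0 < μ i) :
    Agg f * Disagg f μ = 1 := by
  ext i i'
  rw [mul_apply, one_apply]
  split_ifs with h
  · subst h
    refine (Finset.sum_congr rfl fun j _ => ?_).trans (sum_Disagg_apply hf hμ i)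
    unfold Agg Disagg
    split_ifs <;> simp_all
  · refine Finset.sum_eq_zero fun j _ => ?_
    unfold Agg Disagg
    split_ifs <;> simp_all

lemma Disagg_mulVec_apply (u : Fin n → ℝ) (j : Fin N) :
    (Disagg f μ *ᵥ u) j = μ j / (Agg f *ᵥ μ) (f j) * u (f j) := by
  simp [Disagg, mulVec, dotProduct, ite_mul]

lemma Disagg_mulVec_Agg_mulVec (hf : Function.Surjective f) (hμ : ∀ i, 0 < μ i) :
    Disagg f μ *ᵥ (Agg f *ᵥ μ) = μ :=
  funext fun j => by
    rw [Disagg_mulVec_apply, div_mul_cancel₀ _ (Agg_mulVec_pos hf hμ (f j)).ne']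

end Aggregation

section PiProj

variable {N n : ℕ} {f : Fin N → Fin n} {μ : Fin N → ℝ}

lemma innerW_PiProj_mulVec_left (hμ : ∀ i, 0 < μ i) (x y : Fin N → ℝ) :
    innerW (fun i => (μ i)⁻¹) (PiProj f μ *ᵥ x) y
      = ∑ i, (Agg f *ᵥ x) i * (Agg f *ᵥ y) i / (Agg f *ᵥ μ) i := by
  set g : Fin n → ℝ := fun i => (Agg f *ᵥ x) i / (Agg f *ᵥ μ) i
  calc innerW (fun i => (μ i)⁻¹) (PiProj f μ *ᵥ x) y = (g ᵥ* Agg f) ⬝ᵥ y := by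
        rw [vecMul_Agg]
        refine Finset.sum_congr rfl fun j _ => ?_
        rw [PiProj, ← mulVec_mulVec, Disagg_mulVec_apply]
        field_simp [(hμ j).ne']
        simp only [g, Function.comp_apply]; ring
    _ = ∑ i, (Agg f *ᵥ x) i * (Agg f *ᵥ y) i / (Agg f *ᵥ μ) i := by
        rw [← dotProduct_mulVec]
        exact Finset.sum_congr rfl fun i _ => by simp only [g]; ring

lemma PiProj_mul_PiProj (hf : Function.Surjective f) (hμ : ∀ i, 0 < μ i) :
    PiProj f μ * PiProj f μ = PiProj f μ := by
  rw [PiProj, Matrix.mul_assoc, ← Matrix.mul_assoc (Agg f), Agg_mul_Disagg hf hμ,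
    Matrix.one_mul]

lemma innerW_PiProj_mulVec_comm (hμ : ∀ i, 0 < μ i) (x y : Fin N → ℝ) :
    innerW (fun i => (μ i)⁻¹) (PiProj f μ *ᵥ x) y
      = innerW (fun i => (μ i)⁻¹) x (PiProj f μ *ᵥ y) := by
  rw [innerW_PiProj_mulVec_left hμ, innerW_comm, innerW_PiProj_mulVec_left hμ]
  exact Finset.sum_congr rfl fun i _ => by ring

lemma innerW_self_eq_PiProj_add (hf : Function.Surjective f) (hμ : ∀ i, 0 < μ i)
    (x : Fin N → ℝ) :
    innerW (fun i => (μ i)⁻¹) x x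
      = innerW (fun i => (μ i)⁻¹) (PiProj f μ *ᵥ x) (PiProj f μ *ᵥ x)
        + innerW (fun i => (μ i)⁻¹) ((1 - PiProj f μ) *ᵥ x) ((1 - PiProj f μ) *ᵥ x) :=
  innerW_self_eq_add_of_idempotent (PiProj_mul_PiProj hf hμ) (innerW_PiProj_mulVec_comm hμ) x

end PiProj

section Contraction

variable {N : ℕ} {P : Matrix (Fin N) (Fin N) ℝ} {μ : Fin N → ℝ}

lemma innerW_self_sub_innerW_mulVec_self (hPcol : ∀ j, ∑ i, P i j = 1) (hμ : ∀ i, 0 < μ i)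
    (hinv : P *ᵥ μ = μ) (z : Fin N → ℝ) :
    innerW (fun i => (μ i)⁻¹) z z - innerW (fun i => (μ i)⁻¹) (P *ᵥ z) (P *ᵥ z)
      = ∑ i, (μ i)⁻¹ * ((∑ l, ∑ l', P i l * μ l * (P i l' * μ l')
          * (z l / μ l - z l' / μ l') ^ 2) / 2) := by
  have hz : innerW (fun i => (μ i)⁻¹) z z = ∑ i, ∑ l, P i l * (z l ^ 2 / μ l) := by
    rw [Finset.sum_comm]
    refine Finset.sum_congr rfl fun l _ => ?_
    rw [← Finset.sum_mul, hPcol l]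
    field_simp
  rw [hz, innerW, ← Finset.sum_sub_distrib]
  refine Finset.sum_congr rfl fun i _ => ?_
  rw [← sum_mul_sum_mul_sq_sub_sq]
  have h0 : ∑ l, P i l * μ l = μ i := congrFun hinv i
  have h1 : ∑ l, P i l * μ l * (z l / μ l) = (P *ᵥ z) i :=
    Finset.sum_congr rfl fun l _ => by field_simp [(hμ l).ne']
  have h2 : ∑ l, P i l * μ l * (z l / μ l) ^ 2 = ∑ l, P i l * (z l ^ 2 / μ l) :=
    Finset.sum_congr rfl fun l _ => by field_simp [(hμ l).ne']
  rw [h0, h1, h2]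
  field_simp [(hμ i).ne']

lemma lagrange_term_nonneg (hPnn : ∀ i j, 0 ≤ P i j) (hμ : ∀ i, 0 < μ i) (z : Fin N → ℝ)
    (i l l' : Fin N) : 0 ≤ P i l * μ l * (P i l' * μ l') * (z l / μ l - z l' / μ l') ^ 2 :=
  mul_nonneg (mul_nonneg (mul_nonneg (hPnn i l) (hμ l).le) (mul_nonneg (hPnn i l') (hμ l').le))
    (sq_nonneg _)

lemma innerW_mulVec_self_le (hPnn : ∀ i j, 0 ≤ P i j) (hPcol : ∀ j, ∑ i, P i j = 1)
    (hμ : ∀ i, 0 < μ i) (hinv : P *ᵥ μ = μ) (z : Fin N → ℝ) :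
    innerW (fun i => (μ i)⁻¹) (P *ᵥ z) (P *ᵥ z) ≤ innerW (fun i => (μ i)⁻¹) z z := by
  rw [← sub_nonneg, innerW_self_sub_innerW_mulVec_self hPcol hμ hinv]
  exact Finset.sum_nonneg fun i _ => mul_nonneg (inv_nonneg.2 (hμ i).le) <|
    div_nonneg (Finset.sum_nonneg fun l _ => Finset.sum_nonneg fun l' _ =>
      lagrange_term_nonneg hPnn hμ z i l l') zero_le_two

lemma eq_smul_of_innerW_mulVec_self_eq (hPnn : ∀ i j, 0 ≤ P i j)
    (hPcol : ∀ j, ∑ i, P i j = 1) (hconn : StronglyConnected (Pᵀ * P)) (hμ : ∀ i, 0 < μ i)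
    (hinv : P *ᵥ μ = μ) {z : Fin N → ℝ}
    (hz : innerW (fun i => (μ i)⁻¹) (P *ᵥ z) (P *ᵥ z) = innerW (fun i => (μ i)⁻¹) z z) :
    ∃ c : ℝ, z = c • μ := by
  cases isEmpty_or_nonempty (Fin N)
  · exact ⟨0, Subsingleton.elim _ _⟩
  have hsum := sub_eq_zero.2 hz.symm
  rw [innerW_self_sub_innerW_mulVec_self hPcol hμ hinv] at hsum
  have hterm : ∀ i l l', P i l ≠ 0 → P i l' ≠ 0 → z l / μ l = z l' / μ l' := by
    intro i l l' hl hl'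
    have hi := (Finset.sum_eq_zero_iff_of_nonneg fun i _ => mul_nonneg (inv_nonneg.2 (hμ i).le) <|
      div_nonneg (Finset.sum_nonneg fun l _ => Finset.sum_nonneg fun l' _ =>
        lagrange_term_nonneg hPnn hμ z i l l') zero_le_two).1 hsum i (Finset.mem_univ i)
    rw [mul_eq_zero, div_eq_zero_iff] at hi
    have hi' := hi.resolve_left (inv_ne_zero (hμ i).ne') |>.resolve_right two_ne_zero
    have hl₀ := (Finset.sum_eq_zero_iff_of_nonneg fun l _ => Finset.sum_nonneg fun l' _ =>
      lagrange_term_nonneg hPnn hμ z i l l').1 hi' l (Finset.mem_univ l)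
    have hll' := (Finset.sum_eq_zero_iff_of_nonneg fun l' _ =>
      lagrange_term_nonneg hPnn hμ z i l l').1 hl₀ l' (Finset.mem_univ l')
    simpa [hl, hl', (hμ l).ne', (hμ l').ne', sub_eq_zero] using hll'
  have hadj : ∀ l l', (Pᵀ * P) l l' ≠ 0 → z l / μ l = z l' / μ l' := fun l l' h => by
    rw [mul_apply] at h
    obtain ⟨i, -, hi⟩ := Finset.exists_ne_zero_of_sum_ne_zero h
    exact hterm i l l' (left_ne_zero_of_mul hi) (right_ne_zero_of_mul hi)
  obtain ⟨l₀⟩ := ‹Nonempty (Fin N)›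
  refine ⟨z l₀ / μ l₀, funext fun l => ?_⟩
  have := hconn.forall_of_invariant (p := fun l => z l / μ l = z l₀ / μ l₀)
    (fun a b hab ha => (hadj a b hab).symm.trans ha) rfl l
  simp [← this, div_mul_cancel₀ _ (hμ l).ne']

end Contraction

section HatP

variable {N : ℕ} {P : Matrix (Fin N) (Fin N) ℝ} {μ : Fin N → ℝ}

lemma innerW_inv_right_self (hμ : ∀ i, 0 < μ i) (v : Fin N → ℝ) :
    innerW (fun i => (μ i)⁻¹) v μ = ∑ i, v i :=
  Finset.sum_congr rfl fun i _ => by field_simp [(hμ i).ne']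

lemma hatP_mulVec (z : Fin N → ℝ) : hatP P μ *ᵥ z = P *ᵥ z - (∑ i, z i) • μ := by
  rw [hatP, sub_mulVec, vecMulVec_mulVec, one_dotProduct, op_smul_eq_smul]

lemma innerW_hatP_mulVec_self (hPcol : ∀ j, ∑ i, P i j = 1) (hμ : ∀ i, 0 < μ i)
    (hμsum : ∑ i, μ i = 1) (z : Fin N → ℝ) :
    innerW (fun i => (μ i)⁻¹) (hatP P μ *ᵥ z) (hatP P μ *ᵥ z)
      = innerW (fun i => (μ i)⁻¹) (P *ᵥ z) (P *ᵥ z) - (∑ i, z i) ^ 2 := by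
  have hPμ : innerW (fun i => (μ i)⁻¹) (P *ᵥ z) μ = ∑ i, z i := by
    rw [innerW_inv_right_self hμ, sum_mulVec_of_sum_col_eq_one hPcol]
  have hμμ : innerW (fun i => (μ i)⁻¹) μ μ = 1 := by rw [innerW_inv_right_self hμ, hμsum]
  rw [hatP_mulVec, innerW_sub_left, innerW_sub_right, innerW_sub_right, innerW_smul_left,
    innerW_smul_right, innerW_smul_right, innerW_smul_left, innerW_comm _ μ, hPμ, hμμ]
  ring

lemma innerW_one_sub_adjW_hatP_pos (hP : ColStoch P) (hconn : StronglyConnected (Pᵀ * P))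
    (hμ : ∀ i, 0 < μ i) (hμsum : ∑ i, μ i = 1) (hinv : P *ᵥ μ = μ) {z : Fin N → ℝ}
    (hz : z ≠ 0) :
    0 < innerW (fun i => (μ i)⁻¹) z ((1 - adjW μ (hatP P μ) * hatP P μ) *ᵥ z) := by
  rw [innerW_one_sub_adjW_mul_self hμ, innerW_hatP_mulVec_self hP.2 hμ hμsum, sub_sub_eq_add_sub,
    add_sub_right_comm]
  rcases (innerW_mulVec_self_le hP.1 hP.2 hμ hinv z).lt_or_eq with hlt | heq
  · nlinarith [sq_nonneg (∑ i, z i)]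
  · obtain ⟨c, rfl⟩ := eq_smul_of_innerW_mulVec_self_eq hP.1 hP.2 hconn hμ hinv heq
    have hc : c ≠ 0 := by rintro rfl; exact hz (zero_smul _ _)
    simp only [heq, sub_self, zero_add, Pi.smul_apply, smul_eq_mul, ← Finset.mul_sum, hμsum,
      mul_one]
    positivity

end HatP

section Coarse

variable {N n : ℕ} {P : Matrix (Fin N) (Fin N) ℝ} {f : Fin N → Fin n} {μ : Fin N → ℝ}

lemma le_mul_apply_of_nonneg {α β γ : Type*} [Fintype β] {X : Matrix α β ℝ} {Y : Matrix β γ ℝ}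
    (hX : ∀ i j, 0 ≤ X i j) (hY : ∀ i j, 0 ≤ Y i j) (i : α) (b : β) (j : γ) :
    X i b * Y b j ≤ (X * Y) i j :=
  Finset.single_le_sum (f := fun b => X i b * Y b j) (fun b _ => mul_nonneg (hX i b) (hY b j))
    (Finset.mem_univ b)

lemma mul_apply_nonneg {α β γ : Type*} [Fintype β] {X : Matrix α β ℝ} {Y : Matrix β γ ℝ}
    (hX : ∀ i j, 0 ≤ X i j) (hY : ∀ i j, 0 ≤ Y i j) (i : α) (j : γ) : 0 ≤ (X * Y) i j :=
  Finset.sum_nonneg fun b _ => mul_nonneg (hX i b) (hY b j)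

lemma CoarseC_nonneg (hPnn : ∀ i j, 0 ≤ P i j) (hf : Function.Surjective f)
    (hμ : ∀ i, 0 < μ i) (i j : Fin n) : 0 ≤ CoarseC P f μ i j :=
  mul_apply_nonneg (mul_apply_nonneg (Agg_nonneg f) hPnn) (Disagg_nonneg hf hμ) i j

lemma CoarseC_apply_pos (hPnn : ∀ i j, 0 ≤ P i j) (hf : Function.Surjective f)
    (hμ : ∀ i, 0 < μ i) {a c : Fin N} (hac : P a c ≠ 0) : 0 < CoarseC P f μ (f a) (f c) := by
  have hAP := le_mul_apply_of_nonneg (Agg_nonneg f) hPnn (f a) a c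
  have hC := le_mul_apply_of_nonneg (mul_apply_nonneg (Agg_nonneg f) hPnn) (Disagg_nonneg hf hμ)
    (f a) c (f c)
  have hD : 0 < Disagg f μ c (f c) := by
    simpa [Disagg] using div_pos (hμ c) (Agg_mulVec_pos hf hμ (f c))
  simp only [Agg, if_true, one_mul] at hAP
  rw [CoarseC]
  nlinarith [(hPnn a c).lt_of_ne' hac]

lemma CoarseC_mulVec_Agg_mulVec (hf : Function.Surjective f) (hμ : ∀ i, 0 < μ i)
    (hinv : P *ᵥ μ = μ) : CoarseC P f μ *ᵥ (Agg f *ᵥ μ) = Agg f *ᵥ μ := by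
  rw [CoarseC, ← mulVec_mulVec, Disagg_mulVec_Agg_mulVec hf hμ, ← mulVec_mulVec, hinv]

lemma sum_CoarseC_mulVec (hPcol : ∀ j, ∑ i, P i j = 1) (hf : Function.Surjective f)
    (hμ : ∀ i, 0 < μ i) (d : Fin n → ℝ) : ∑ i, (CoarseC P f μ *ᵥ d) i = ∑ i, d i := by
  rw [CoarseC, ← mulVec_mulVec, ← mulVec_mulVec, sum_mulVec_of_sum_col_eq_one sum_Agg_apply,
    sum_mulVec_of_sum_col_eq_one hPcol, sum_mulVec_of_sum_col_eq_one (sum_Disagg_apply hf hμ)]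

lemma Agg_mul_mul_Disagg_mulVec (hf : Function.Surjective f) (hμ : ∀ i, 0 < μ i) (d : Fin n → ℝ) :
    (Agg f * (1 - P + vecMulVec μ 1) * Disagg f μ) *ᵥ d
      = d - CoarseC P f μ *ᵥ d + (∑ i, d i) • (Agg f *ᵥ μ) := by
  rw [← mulVec_mulVec, ← mulVec_mulVec, add_mulVec, sub_mulVec, one_mulVec, vecMulVec_mulVec,
    one_dotProduct, op_smul_eq_smul, sum_mulVec_of_sum_col_eq_one (sum_Disagg_apply hf hμ),
    mulVec_add, mulVec_sub, mulVec_smul, mulVec_mulVec, Agg_mul_Disagg hf hμ, one_mulVec,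
    CoarseC, ← mulVec_mulVec, ← mulVec_mulVec]

lemma isUnit_det_Agg_mul_mul_Disagg (hP : ColStoch P) (hirr : Irred P) (hf : Function.Surjective f)
    (hμ : ∀ i, 0 < μ i) (hμsum : ∑ i, μ i = 1) (hinv : P *ᵥ μ = μ) :
    IsUnit (Agg f * (1 - P + vecMulVec μ 1) * Disagg f μ).det := by
  rw [isUnit_iff_ne_zero, Ne, ← exists_mulVec_eq_zero_iff]
  rintro ⟨d, hd0, hd⟩
  rw [Agg_mul_mul_Disagg_mulVec hf hμ] at hd
  have hνsum : ∑ i, (Agg f *ᵥ μ) i = 1 := by rw [sum_mulVec_of_sum_col_eq_one sum_Agg_apply, hμsum]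
  have hsum : ∑ i, d i = 0 := by
    simpa [Finset.sum_add_distrib, Finset.sum_sub_distrib, ← Finset.mul_sum, hνsum,
      sum_CoarseC_mulVec hP.2 hf hμ] using congrArg (fun v => ∑ i, v i) hd
  have hCd : CoarseC P f μ *ᵥ d = d := by
    rw [hsum, zero_smul, add_zero, sub_eq_zero] at hd
    exact hd.symm
  have hCconn : StronglyConnected (CoarseC P f μ) :=
    hirr.stronglyConnected.of_surjective hf fun a c hac => (CoarseC_apply_pos hP.1 hf hμ hac).ne'
  obtain ⟨c, rfl⟩ := eq_smul_of_mulVec_eq_self (CoarseC_nonneg hP.1 hf hμ) hCconn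
    (Agg_mulVec_pos hf hμ) (CoarseC_mulVec_Agg_mulVec hf hμ hinv) hCd
  simp only [Pi.smul_apply, smul_eq_mul, ← Finset.mul_sum, hνsum, mul_one] at hsum
  exact hd0 (by rw [hsum, zero_smul])

end Coarse

section CoarseProjection

variable {N n : ℕ} {P : Matrix (Fin N) (Fin N) ℝ} {f : Fin N → Fin n} {μ ν : Fin N → ℝ}

lemma mul_CoarseS (hB : IsUnit (Agg f * (1 - P + vecMulVec μ 1) * Disagg f ν).det) :
    Agg f * (1 - P + vecMulVec μ 1) * CoarseS P f μ ν = Agg f * (1 - P + vecMulVec μ 1) := by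
  have h : Agg f * (1 - P + vecMulVec μ 1) * CoarseS P f μ ν
      = Agg f * (1 - P + vecMulVec μ 1) * Disagg f ν
        * (Agg f * (1 - P + vecMulVec μ 1) * Disagg f ν)⁻¹
        * (Agg f * (1 - P + vecMulVec μ 1)) := by
    simp only [CoarseS, Matrix.mul_assoc]
  rw [h, mul_nonsing_inv _ hB, Matrix.one_mul]

lemma CoarseS_mul_CoarseS (hB : IsUnit (Agg f * (1 - P + vecMulVec μ 1) * Disagg f ν).det) :
    CoarseS P f μ ν * CoarseS P f μ ν = CoarseS P f μ ν := by
  conv_lhs => enter [1]; rw [CoarseS]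
  rw [Matrix.mul_assoc, mul_CoarseS hB, ← CoarseS]

lemma CoarseS_mul_PiProj (hB : IsUnit (Agg f * (1 - P + vecMulVec μ 1) * Disagg f ν).det) :
    CoarseS P f μ ν * PiProj f ν = PiProj f ν := by
  have h : CoarseS P f μ ν * PiProj f ν
      = Disagg f ν * ((Agg f * (1 - P + vecMulVec μ 1) * Disagg f ν)⁻¹
        * (Agg f * (1 - P + vecMulVec μ 1) * Disagg f ν)) * Agg f := by
    simp only [CoarseS, PiProj, Matrix.mul_assoc]
  rw [h, nonsing_inv_mul _ hB, Matrix.mul_one, PiProj]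

lemma PiProj_mul_CoarseS (hf : Function.Surjective f) (hν : ∀ i, 0 < ν i) :
    PiProj f ν * CoarseS P f μ ν = CoarseS P f μ ν := by
  simp only [CoarseS, PiProj, Matrix.mul_assoc]
  rw [← Matrix.mul_assoc (Agg f) (Disagg f ν), Agg_mul_Disagg hf hν, Matrix.one_mul]

lemma one_sub_PiProj_mul_one_sub_CoarseS (hf : Function.Surjective f) (hν : ∀ i, 0 < ν i) :
    (1 - PiProj f ν) * (1 - CoarseS P f μ ν) = 1 - PiProj f ν := by
  simp only [Matrix.mul_sub, Matrix.sub_mul, PiProj_mul_CoarseS hf hν, Matrix.mul_one,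
    Matrix.one_mul]
  abel

lemma one_sub_CoarseS_mul_one_sub_PiProj
    (hB : IsUnit (Agg f * (1 - P + vecMulVec μ 1) * Disagg f ν).det) :
    (1 - CoarseS P f μ ν) * (1 - PiProj f ν) = 1 - CoarseS P f μ ν := by
  simp only [Matrix.mul_sub, Matrix.sub_mul, CoarseS_mul_PiProj hB, Matrix.mul_one,
    Matrix.one_mul]
  abel

lemma one_sub_PiProj_mulVec_ne_zero
    (hB : IsUnit (Agg f * (1 - P + vecMulVec μ 1) * Disagg f ν).det) {z : Fin N → ℝ}
    (hSz : CoarseS P f μ ν *ᵥ z = 0) (hz : z ≠ 0) : (1 - PiProj f ν) *ᵥ z ≠ 0 := by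
  intro h
  rw [sub_mulVec, one_mulVec, sub_eq_zero] at h
  apply hz
  calc z = PiProj f ν *ᵥ z := h
    _ = CoarseS P f μ ν *ᵥ (PiProj f ν *ᵥ z) := by rw [mulVec_mulVec, CoarseS_mul_PiProj hB]
    _ = 0 := by rw [← h, hSz]

lemma PiProj_mulVec_hatP_mulVec
    (hB : IsUnit (Agg f * (1 - P + vecMulVec μ 1) * Disagg f ν).det) {z : Fin N → ℝ}
    (hSz : CoarseS P f μ ν *ᵥ z = 0) : PiProj f ν *ᵥ (hatP P μ *ᵥ z) = PiProj f ν *ᵥ z := by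
  have hEz : Agg f *ᵥ ((1 - hatP P μ) *ᵥ z) = 0 := by
    rw [hatP, sub_sub_eq_add_sub, add_sub_right_comm, mulVec_mulVec, ← mul_CoarseS hB,
      ← mulVec_mulVec, hSz, mulVec_zero]
  rw [sub_mulVec, one_mulVec, mulVec_sub, sub_eq_zero] at hEz
  rw [PiProj, ← mulVec_mulVec, ← mulVec_mulVec, hEz]

lemma exists_CoarseS_mulVec_eq_zero (hf : Function.Surjective f)
    (hcoarse : ∃ a b : Fin N, a ≠ b ∧ f a = f b) :
    ∃ z : Fin N → ℝ, z ≠ 0 ∧ CoarseS P f μ ν *ᵥ z = 0 := by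
  have hnN : n < N := by
    obtain ⟨a, b, hab, hfab⟩ := hcoarse
    simpa using Fintype.card_lt_of_surjective_not_injective f hf fun hinj => hab (hinj hfab)
  have hker := LinearMap.ker_ne_bot_of_finrank_lt
    (f := mulVecLin (Agg f * (1 - P + vecMulVec μ 1))) (by simpa using hnN)
  obtain ⟨z, hzker, hz⟩ := (Submodule.ne_bot_iff _).1 hker
  have hEz : (Agg f * (1 - P + vecMulVec μ 1)) *ᵥ z = 0 := hzker
  exact ⟨z, hz, by rw [CoarseS, ← mulVec_mulVec, hEz, mulVec_zero]⟩

end CoarseProjection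

section TwoGrid

variable {N n : ℕ} {P : Matrix (Fin N) (Fin N) ℝ} {f : Fin N → Fin n} {μ : Fin N → ℝ}

lemma innerW_one_sub_PiProj_hatP_mulVec_self (hf : Function.Surjective f) (hμ : ∀ i, 0 < μ i)
    (hB : IsUnit (Agg f * (1 - P + vecMulVec μ 1) * Disagg f μ).det) {z : Fin N → ℝ}
    (hSz : CoarseS P f μ μ *ᵥ z = 0) :
    innerW (fun i => (μ i)⁻¹) ((1 - PiProj f μ) *ᵥ (hatP P μ *ᵥ z))
        ((1 - PiProj f μ) *ᵥ (hatP P μ *ᵥ z))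
      = innerW (fun i => (μ i)⁻¹) ((1 - PiProj f μ) *ᵥ z) ((1 - PiProj f μ) *ᵥ z)
        - innerW (fun i => (μ i)⁻¹) z ((1 - adjW μ (hatP P μ) * hatP P μ) *ᵥ z) := by
  have hPz := innerW_self_eq_PiProj_add hf hμ (hatP P μ *ᵥ z)
  rw [PiProj_mulVec_hatP_mulVec hB hSz] at hPz
  linarith [innerW_self_eq_PiProj_add hf hμ z, innerW_one_sub_adjW_mul_self hμ (hatP P μ) z]

lemma innerW_one_sub_PiProj_mul_Jop_mulVec_self (hf : Function.Surjective f)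
    (hμ : ∀ i, 0 < μ i) (hB : IsUnit (Agg f * (1 - P + vecMulVec μ 1) * Disagg f μ).det)
    (x : Fin N → ℝ) :
    innerW (fun i => (μ i)⁻¹) (((1 - PiProj f μ) * Jop P f μ μ) *ᵥ x)
        (((1 - PiProj f μ) * Jop P f μ μ) *ᵥ x)
      = innerW (fun i => (μ i)⁻¹) ((1 - PiProj f μ) *ᵥ x) ((1 - PiProj f μ) *ᵥ x)
        - innerW (fun i => (μ i)⁻¹) ((1 - CoarseS P f μ μ) *ᵥ x)
            ((1 - adjW μ (hatP P μ) * hatP P μ) *ᵥ ((1 - CoarseS P f μ μ) *ᵥ x)) := by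
  have hSz : CoarseS P f μ μ *ᵥ ((1 - CoarseS P f μ μ) *ᵥ x) = 0 :=
    (mem_range_one_sub_mulVec_iff (CoarseS_mul_CoarseS hB) _).1 ⟨x, rfl⟩
  have hPiz : (1 - PiProj f μ) *ᵥ ((1 - CoarseS P f μ μ) *ᵥ x) = (1 - PiProj f μ) *ᵥ x := by
    rw [mulVec_mulVec, one_sub_PiProj_mul_one_sub_CoarseS hf hμ]
  rw [Jop, ← Matrix.mul_assoc, ← mulVec_mulVec, ← mulVec_mulVec,
    innerW_one_sub_PiProj_hatP_mulVec_self hf hμ hB hSz, hPiz]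

noncomputable def rayleighQuotient (P : Matrix (Fin N) (Fin N) ℝ) (f : Fin N → Fin n)
    (μ z : Fin N → ℝ) : ℝ :=
  innerW (fun i => (μ i)⁻¹) z ((1 - adjW μ (hatP P μ) * hatP P μ) *ᵥ z)
    / innerW (fun i => (μ i)⁻¹) ((1 - PiProj f μ) *ᵥ z) ((1 - PiProj f μ) *ᵥ z)

lemma innerW_one_sub_PiProj_mulVec_self_pos (hμ : ∀ i, 0 < μ i)
    (hB : IsUnit (Agg f * (1 - P + vecMulVec μ 1) * Disagg f μ).det) {z : Fin N → ℝ}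
    (hSz : CoarseS P f μ μ *ᵥ z = 0) (hz : z ≠ 0) :
    0 < innerW (fun i => (μ i)⁻¹) ((1 - PiProj f μ) *ᵥ z) ((1 - PiProj f μ) *ᵥ z) :=
  innerW_self_pos (fun i => inv_pos.2 (hμ i)) (one_sub_PiProj_mulVec_ne_zero hB hSz hz)

lemma mul_le_of_le_rayleighQuotient (hμ : ∀ i, 0 < μ i)
    (hB : IsUnit (Agg f * (1 - P + vecMulVec μ 1) * Disagg f μ).det) {m : ℝ}
    (hm : ∀ z, CoarseS P f μ μ *ᵥ z = 0 → z ≠ 0 → m ≤ rayleighQuotient P f μ z)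
    {z : Fin N → ℝ} (hSz : CoarseS P f μ μ *ᵥ z = 0) :
    m * innerW (fun i => (μ i)⁻¹) ((1 - PiProj f μ) *ᵥ z) ((1 - PiProj f μ) *ᵥ z)
      ≤ innerW (fun i => (μ i)⁻¹) z ((1 - adjW μ (hatP P μ) * hatP P μ) *ᵥ z) := by
  rcases eq_or_ne z 0 with rfl | hz
  · simp [innerW]
  · exact (le_div_iff₀ (innerW_one_sub_PiProj_mulVec_self_pos hμ hB hSz hz)).1 (hm z hSz hz)

lemma exists_forall_rayleighQuotient_le (hf : Function.Surjective f) (hμ : ∀ i, 0 < μ i)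
    (hB : IsUnit (Agg f * (1 - P + vecMulVec μ 1) * Disagg f μ).det)
    (hcoarse : ∃ a b : Fin N, a ≠ b ∧ f a = f b) :
    ∃ z₀, CoarseS P f μ μ *ᵥ z₀ = 0 ∧ z₀ ≠ 0 ∧ ∀ z, CoarseS P f μ μ *ᵥ z = 0 → z ≠ 0 →
      rayleighQuotient P f μ z₀ ≤ rayleighQuotient P f μ z := by
  set Q := 1 - adjW μ (hatP P μ) * hatP P μ
  have hV : LinearMap.ker (mulVecLin (CoarseS P f μ μ)) ≠ ⊥ := by
    obtain ⟨z, hz, hSz⟩ := exists_CoarseS_mulVec_eq_zero (P := P) (μ := μ) (ν := μ) hf hcoarse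
    exact (Submodule.ne_bot_iff _).2 ⟨z, hSz, hz⟩
  exact exists_forall_div_le_div _ hV (g := fun z => innerW (fun i => (μ i)⁻¹) z (Q *ᵥ z))
    (by simpa using continuous_innerW_mulVec (fun i => (μ i)⁻¹) 1 Q)
    (continuous_innerW_mulVec _ _ _) (by simpa using innerW_mulVec_smul (fun i => (μ i)⁻¹) 1 Q)
    (innerW_mulVec_smul _ _ _) fun _ hSz hz => innerW_one_sub_PiProj_mulVec_self_pos hμ hB hSz hz

lemma opNormW_sq_one_sub_PiProj_mul_Jop (hf : Function.Surjective f) (hμ : ∀ i, 0 < μ i)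
    (hB : IsUnit (Agg f * (1 - P + vecMulVec μ 1) * Disagg f μ).det) {z₀ : Fin N → ℝ}
    (hSz₀ : CoarseS P f μ μ *ᵥ z₀ = 0) (hz₀ : z₀ ≠ 0)
    (hmin : ∀ z, CoarseS P f μ μ *ᵥ z = 0 → z ≠ 0 →
      rayleighQuotient P f μ z₀ ≤ rayleighQuotient P f μ z) :
    opNormW (fun i => (μ i)⁻¹) ((1 - PiProj f μ) * Jop P f μ μ) ^ 2
      = 1 - rayleighQuotient P f μ z₀ := by
  have hw : ∀ i, 0 ≤ (μ i)⁻¹ := fun i => (inv_pos.2 (hμ i)).le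
  have hden₀ := innerW_one_sub_PiProj_mulVec_self_pos hμ hB hSz₀ hz₀
  set m := rayleighQuotient P f μ z₀
  have hm₀ : innerW (fun i => (μ i)⁻¹) z₀ ((1 - adjW μ (hatP P μ) * hatP P μ) *ᵥ z₀)
      = m * innerW (fun i => (μ i)⁻¹) ((1 - PiProj f μ) *ᵥ z₀) ((1 - PiProj f μ) *ᵥ z₀) :=
    (div_mul_cancel₀ _ hden₀.ne').symm
  have hfix : (1 - CoarseS P f μ μ) *ᵥ ((1 - PiProj f μ) *ᵥ z₀) = z₀ := by
    rw [mulVec_mulVec, one_sub_CoarseS_mul_one_sub_PiProj hB, sub_mulVec, one_mulVec, hSz₀,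
      sub_zero]
  have hPiz₀ : (1 - PiProj f μ) *ᵥ ((1 - PiProj f μ) *ᵥ z₀) = (1 - PiProj f μ) *ᵥ z₀ := by
    rw [mulVec_mulVec, (IsIdempotentElem.one_sub (PiProj_mul_PiProj hf hμ)).eq]
  have hT₀ := innerW_one_sub_PiProj_mul_Jop_mulVec_self hf hμ hB ((1 - PiProj f μ) *ᵥ z₀)
  rw [hfix, hPiz₀] at hT₀
  have hm1 : 0 ≤ 1 - m := by
    nlinarith [innerW_self_nonneg hw (((1 - PiProj f μ) * Jop P f μ μ) *ᵥ
      ((1 - PiProj f μ) *ᵥ z₀)), hden₀]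
  refine opNormW_sq_eq_of_attained hm1 (fun x => ?_) hden₀ ?_
  · rw [innerW_one_sub_PiProj_mul_Jop_mulVec_self hf hμ hB]
    have hmz := mul_le_of_le_rayleighQuotient hμ hB hmin
      ((mem_range_one_sub_mulVec_iff (CoarseS_mul_CoarseS hB) _).1 ⟨x, rfl⟩)
    rw [mulVec_mulVec, one_sub_PiProj_mul_one_sub_CoarseS hf hμ] at hmz
    nlinarith [innerW_self_eq_PiProj_add hf hμ x, innerW_self_nonneg hw (PiProj f μ *ᵥ x)]
  · rw [hT₀]
    linear_combination -hm₀

end TwoGrid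

/-- exact variational formula for `‖(I-Π(μ))J(μ)‖²_{1/μ}` and strict bound
below one. -/
theorem stmt14 {N n : ℕ} (P : Matrix (Fin N) (Fin N) ℝ)
    (μ : Fin N → ℝ) (hP : ColStoch P) (hirr : Irred P) (hirr2 : Irred (Pᵀ * P))
    (hμpos : ∀ i, 0 < μ i) (hμsum : ∑ i, μ i = 1) (hinv : P.mulVec μ = μ)
    (f : Fin N → Fin n) (hf : Function.Surjective f)
    (hcoarse : ∃ a b : Fin N, a ≠ b ∧ f a = f b) :
    opNormW (fun i => (μ i)⁻¹) ((1 - PiProj f μ) * Jop P f μ μ) ^ 2 =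
        1 - sInf {r : ℝ | ∃ z ∈ Set.range (1 - CoarseS P f μ μ).mulVec, z ≠ 0 ∧
          r = innerW (fun i => (μ i)⁻¹) z
                ((1 - adjW μ (hatP P μ) * hatP P μ).mulVec z) /
              normW (fun i => (μ i)⁻¹) ((1 - PiProj f μ).mulVec z) ^ 2} ∧
      opNormW (fun i => (μ i)⁻¹) ((1 - PiProj f μ) * Jop P f μ μ) ^ 2 < 1 := by
  have hw : ∀ i, 0 ≤ (μ i)⁻¹ := fun i => (inv_pos.2 (hμpos i)).le
  have hB := isUnit_det_Agg_mul_mul_Disagg hP hirr hf hμpos hμsum hinv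
  have hrange := mem_range_one_sub_mulVec_iff (CoarseS_mul_CoarseS hB)
  obtain ⟨z₀, hSz₀, hz₀, hmin⟩ := exists_forall_rayleighQuotient_le hf hμpos hB hcoarse
  have hop := opNormW_sq_one_sub_PiProj_mul_Jop hf hμpos hB hSz₀ hz₀ hmin
  refine ⟨?_, ?_⟩
  · rw [hop, IsLeast.csInf_eq]
    simp only [normW_sq hw]
    refine ⟨⟨z₀, (hrange z₀).2 hSz₀, hz₀, rfl⟩, ?_⟩
    rintro r ⟨z, hz, hz0, rfl⟩
    exact hmin z ((hrange z).1 hz) hz0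
  · rw [hop, sub_lt_self_iff]
    exact div_pos (innerW_one_sub_adjW_hatP_pos hP hirr2.stronglyConnected hμpos hμsum hinv hz₀)
      (innerW_one_sub_PiProj_mulVec_self_pos hμpos hB hSz₀ hz₀)
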